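/- Let u be an alternating permutation of length 2n avoiding 2143 with next-to-last entry a and with active values s_1 < s_2 < ... < s_b. For any x with 1 ≤ x ≤ a+1, the extension v = u ← x is an alternating permutation of length 2n+1 avoiding 2143, and the set of active values of v is exactly {1, 2, ..., x} ∪ {s_x + 1, s_{x+1} + 1, ..., s_b + 1}. -/
import Mathlib


/-- A word `w : Fin n → ℕ` is a permutation of length `n` (1-indexed values). -/
def IsPermWord (n : ℕ) (w : Fin n → ℕ) : Prop :=
  Function.Injective w ∧ Set.range w = Set.Icc 1 n

/-- `w` contains the pattern 2143. -/
def Contains2143 {n : ℕ} (w : Fin n → ℕ) : Prop :=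
  ∃ i1 i2 i3 i4 : Fin n, i1 < i2 ∧ i2 < i3 ∧ i3 < i4 ∧
    w i2 < w i1 ∧ w i1 < w i4 ∧ w i4 < w i3

/-- `w` contains the pattern 1234 (a four-term increasing subsequence). -/
def Contains1234 {n : ℕ} (w : Fin n → ℕ) : Prop :=
  ∃ i1 i2 i3 i4 : Fin n, i1 < i2 ∧ i2 < i3 ∧ i3 < i4 ∧
    w i1 < w i2 ∧ w i2 < w i3 ∧ w i3 < w i4

/-- `w` contains the pattern `p`. -/
def ContainsPat {n k : ℕ} (w : Fin n → ℕ) (p : Fin k → ℕ) : Prop :=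
  ∃ f : Fin k → Fin n, StrictMono f ∧ ∀ a b : Fin k, p a < p b ↔ w (f a) < w (f b)

/-- The extension `w ← c`: bump every entry `≥ c` by one and append `c`. -/
def extendBy {n : ℕ} (w : Fin n → ℕ) (c : ℕ) : Fin (n + 1) → ℕ :=
  fun j => if h : (j : ℕ) < n then (if c ≤ w ⟨j, h⟩ then w ⟨j, h⟩ + 1 else w ⟨j, h⟩) else c

/-- `c` is an active value for `w` (with respect to the pattern 2143). -/
def IsActive {n : ℕ} (w : Fin n → ℕ) (c : ℕ) : Prop :=
  ¬ Contains2143 (extendBy w c)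

/-- `w` is (up-down) alternating: `w 1 < w 2 > w 3 < w 4 > ...` (1-indexed). -/
def Alternating {n : ℕ} (w : Fin n → ℕ) : Prop :=
  ∀ (i : ℕ) (h : i + 1 < n),
    if i % 2 = 0 then w ⟨i, by omega⟩ < w ⟨i + 1, h⟩ else w ⟨i + 1, h⟩ < w ⟨i, by omega⟩

/-- The set of active values for `w` among `{1, ..., n+1}`. -/
def activeSet {n : ℕ} (w : Fin n → ℕ) : Set ℕ :=
  {c | 1 ≤ c ∧ c ≤ n + 1 ∧ IsActive w c}

/-- The reverse-complement of a word of length `m` (1-indexed values). -/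
def revComp {m : ℕ} (w : Fin m → ℕ) : Fin m → ℕ :=
  fun i => m + 1 - w i.rev

/-- `T` is a standard Young tableau of rectangular shape `(n, n, n)`,
entries `1, ..., 3n` each used once, rows and columns strictly increasing. -/
structure IsSYT3 (n : ℕ) (T : Fin 3 → Fin n → ℕ) : Prop where
  inj : Function.Injective (fun p : Fin 3 × Fin n => T p.1 p.2)
  range_eq : (Set.range fun p : Fin 3 × Fin n => T p.1 p.2) = Set.Icc 1 (3 * n)
  row_inc : ∀ i : Fin 3, StrictMono (T i)
  col_inc : ∀ j : Fin n, StrictMono (fun i : Fin 3 => T i j)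

/-- `(T1, T2, T3)` is a shifted standard Young tableau of shape `(n+2, n+1, n)`:
row `i` is indented `i - 1` columns; entries `1, ..., 3n+3` each used once,
rows strictly increasing, and (shifted) columns strictly increasing. -/
structure IsShiftedSYT (n : ℕ) (T1 : Fin (n + 2) → ℕ) (T2 : Fin (n + 1) → ℕ)
    (T3 : Fin n → ℕ) : Prop where
  inj : Function.Injective (Sum.elim T1 (Sum.elim T2 T3))
  range_eq : Set.range (Sum.elim T1 (Sum.elim T2 T3)) = Set.Icc 1 (3 * n + 3)
  row1 : StrictMono T1
  row2 : StrictMono T2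
  row3 : StrictMono T3
  col12 : ∀ j : Fin (n + 1), T1 j.succ < T2 j
  col23 : ∀ j : Fin n, T2 j.succ < T3 j

def bumpv (c t : ℕ) : ℕ := if c ≤ t then t + 1 else t

def Bad {n : ℕ} (w : Fin n → ℕ) (c : ℕ) : Prop :=
  ∃ i1 i2 i3 : Fin n, i1 < i2 ∧ i2 < i3 ∧ w i2 < w i1 ∧ w i1 < c ∧ c ≤ w i3

lemma extendBy_apply_lt {n : ℕ} (w : Fin n → ℕ) (c : ℕ) (j : Fin (n+1)) (h : (j:ℕ) < n) :
    extendBy w c j = bumpv c (w ⟨j, h⟩) := by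
  simp [extendBy, bumpv, h]

lemma extendBy_apply_last {n : ℕ} (w : Fin n → ℕ) (c : ℕ) (j : Fin (n+1)) (h : ¬ (j:ℕ) < n) :
    extendBy w c j = c := by
  simp [extendBy, h]

lemma extendBy_mk {n : ℕ} (w : Fin n → ℕ) (c : ℕ) (i : Fin n) (h : (i:ℕ) < n + 1) :
    extendBy w c ⟨(i:ℕ), h⟩ = bumpv c (w i) := by
  simp [extendBy, bumpv, i.isLt]

lemma extendBy_mk' {n : ℕ} (w : Fin n → ℕ) (c : ℕ) (i : ℕ) (h : i < n + 1) (h' : i < n) :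
    extendBy w c ⟨i, h⟩ = bumpv c (w ⟨i, h'⟩) := by
  simp [extendBy, bumpv, h']

lemma bumpv_lt_bumpv {c s t : ℕ} : bumpv c s < bumpv c t ↔ s < t := by
  unfold bumpv; split <;> split <;> omega

lemma bumpv_lt_self {c t : ℕ} : bumpv c t < c ↔ t < c := by
  unfold bumpv; split <;> omega

lemma lt_bumpv_self {c t : ℕ} : c < bumpv c t ↔ c ≤ t := by
  unfold bumpv; split <;> omega

lemma le_bumpv {c t : ℕ} : t ≤ bumpv c t := by
  unfold bumpv; split <;> omega

lemma contains_extend_iff {n : ℕ} (w : Fin n → ℕ) (c : ℕ) :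
    Contains2143 (extendBy w c) ↔ Contains2143 w ∨ Bad w c := by
  constructor
  · rintro ⟨i1, i2, i3, i4, h12, h23, h34, p1, p2, p3⟩
    have h12' : (i1:ℕ) < (i2:ℕ) := h12
    have h23' : (i2:ℕ) < (i3:ℕ) := h23
    have h34' : (i3:ℕ) < (i4:ℕ) := h34
    have h4 : (i4:ℕ) < n + 1 := i4.isLt
    by_cases hc : (i4:ℕ) < n
    · left
      have h1 : (i1:ℕ) < n := by omega
      have h2 : (i2:ℕ) < n := by omega
      have h3 : (i3:ℕ) < n := by omega
      rw [extendBy_apply_lt w c i2 h2, extendBy_apply_lt w c i1 h1] at p1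
      rw [extendBy_apply_lt w c i1 h1, extendBy_apply_lt w c i4 hc] at p2
      rw [extendBy_apply_lt w c i4 hc, extendBy_apply_lt w c i3 h3] at p3
      exact ⟨⟨i1, h1⟩, ⟨i2, h2⟩, ⟨i3, h3⟩, ⟨i4, hc⟩, h12', h23', h34',
        bumpv_lt_bumpv.mp p1, bumpv_lt_bumpv.mp p2, bumpv_lt_bumpv.mp p3⟩
    · right
      have h1 : (i1:ℕ) < n := by omega
      have h2 : (i2:ℕ) < n := by omega
      have h3 : (i3:ℕ) < n := by omega
      rw [extendBy_apply_lt w c i2 h2, extendBy_apply_lt w c i1 h1] at p1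
      rw [extendBy_apply_lt w c i1 h1, extendBy_apply_last w c i4 hc] at p2
      rw [extendBy_apply_last w c i4 hc, extendBy_apply_lt w c i3 h3] at p3
      exact ⟨⟨i1, h1⟩, ⟨i2, h2⟩, ⟨i3, h3⟩, h12', h23',
        bumpv_lt_bumpv.mp p1, bumpv_lt_self.mp p2, lt_bumpv_self.mp p3⟩
  · rintro (⟨i1, i2, i3, i4, h12, h23, h34, p1, p2, p3⟩ | ⟨i1, i2, i3, h12, h23, p1, p2, p3⟩)
    · refine ⟨⟨i1, by omega⟩, ⟨i2, by omega⟩, ⟨i3, by omega⟩, ⟨i4, by omega⟩,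
        h12, h23, h34, ?_, ?_, ?_⟩ <;>
      · rw [extendBy_mk, extendBy_mk]
        exact bumpv_lt_bumpv.mpr (by assumption)
    · refine ⟨⟨i1, by omega⟩, ⟨i2, by omega⟩, ⟨i3, by omega⟩, ⟨n, by omega⟩,
        h12, h23, i3.isLt, ?_, ?_, ?_⟩
      · rw [extendBy_mk, extendBy_mk]; exact bumpv_lt_bumpv.mpr p1
      · rw [extendBy_mk, extendBy_apply_last _ _ _ (by simp)]
        exact bumpv_lt_self.mpr p2
      · rw [extendBy_mk, extendBy_apply_last _ _ _ (by simp)]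
        exact lt_bumpv_self.mpr p3

lemma isActive_iff {n : ℕ} {w : Fin n → ℕ} (hw : ¬ Contains2143 w) (c : ℕ) :
    IsActive w c ↔ ¬ Bad w c := by
  unfold IsActive
  rw [contains_extend_iff]
  tauto

lemma bumpv_lt_add_one {x c t : ℕ} (h : x ≤ c) : bumpv x t < c + 1 ↔ t < c := by
  unfold bumpv; split <;> omega

lemma add_one_le_bumpv {x c t : ℕ} (h : x ≤ c) : c + 1 ≤ bumpv x t ↔ c ≤ t := by
  unfold bumpv; split <;> omega

lemma bad_extend_iff {n : ℕ} (w : Fin n → ℕ) {x c : ℕ} (hxc : x ≤ c) :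
    Bad (extendBy w x) (c + 1) ↔ Bad w c := by
  constructor
  · rintro ⟨i1, i2, i3, h12, h23, p1, p2, p3⟩
    have h12' : (i1:ℕ) < (i2:ℕ) := h12
    have h23' : (i2:ℕ) < (i3:ℕ) := h23
    have h3 : (i3:ℕ) < n := by
      by_contra hc
      rw [extendBy_apply_last w x i3 hc] at p3
      omega
    have h1 : (i1:ℕ) < n := by omega
    have h2 : (i2:ℕ) < n := by omega
    rw [extendBy_apply_lt w x i2 h2, extendBy_apply_lt w x i1 h1] at p1
    rw [extendBy_apply_lt w x i1 h1] at p2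
    rw [extendBy_apply_lt w x i3 h3] at p3
    exact ⟨⟨i1, h1⟩, ⟨i2, h2⟩, ⟨i3, h3⟩, h12', h23', bumpv_lt_bumpv.mp p1,
      (bumpv_lt_add_one hxc).mp p2, (add_one_le_bumpv hxc).mp p3⟩
  · rintro ⟨i1, i2, i3, h12, h23, p1, p2, p3⟩
    refine ⟨⟨i1, by omega⟩, ⟨i2, by omega⟩, ⟨i3, by omega⟩, h12, h23, ?_, ?_, ?_⟩
    · rw [extendBy_mk, extendBy_mk]; exact bumpv_lt_bumpv.mpr p1
    · rw [extendBy_mk]; exact (bumpv_lt_add_one hxc).mpr p2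
    · rw [extendBy_mk]; exact (add_one_le_bumpv hxc).mpr p3

set_option maxHeartbeats 2000000

/-- extending by `x ≤ a + 1` stays alternating and 2143-avoiding,
and the active values become `{1, ..., x} ∪ {s_x + 1, ..., s_b + 1}` (1-indexed `s`). -/
theorem stmt5 (n : ℕ) (hn : 1 ≤ n) (u : Fin (2 * n) → ℕ)
    (hu : IsPermWord (2 * n) u) (halt : Alternating u) (havoid : ¬ Contains2143 u)
    (a : ℕ) (ha : a = u ⟨2 * n - 2, by omega⟩)
    (b : ℕ) (s : Fin b → ℕ) (hs : StrictMono s) (hrange : Set.range s = activeSet u)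
    (x : ℕ) (hx1 : 1 ≤ x) (hx2 : x ≤ a + 1) :
    Alternating (extendBy u x) ∧ ¬ Contains2143 (extendBy u x) ∧
      activeSet (extendBy u x) =
        Set.Icc 1 x ∪ {d | ∃ i : Fin b, x ≤ (i : ℕ) + 1 ∧ d = s i + 1} := by
  have hval : ∀ j : Fin (2*n), 1 ≤ u j ∧ u j ≤ 2*n := by
    intro j
    have hj : u j ∈ Set.range u := ⟨j, rfl⟩
    rw [hu.2] at hj
    simpa using hj
  have haM : a < u ⟨2*n-1, by omega⟩ := by
    have H := halt (2*n-2) (by omega)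
    rw [if_pos (by omega)] at H
    have e : (⟨2*n-2+1, by omega⟩ : Fin (2*n)) = ⟨2*n-1, by omega⟩ := by
      apply Fin.ext; simp; omega
    rw [e] at H
    rw [ha]; exact H
  have ha2n : a + 1 ≤ 2*n := by
    have := (hval ⟨2*n-1, by omega⟩).2
    omega
  -- Key lemma: inversions with top index away from the end have large top value
  have key : ∀ i1 i2 : Fin (2*n), (i1:ℕ) < (i2:ℕ) → (i2:ℕ) + 2 ≤ 2*n →
      u i2 < u i1 → a < u i1 := by
    intro i1 i2 h12 h2 hlt
    by_contra hc
    push_neg at hc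
    have hne2 : (i2:ℕ) + 2 ≠ 2*n := by
      intro he
      have e : i2 = ⟨2*n-2, by omega⟩ := by apply Fin.ext; simp; omega
      rw [e] at hlt
      omega
    have hn2 : 2 ≤ n := by omega
    have hpen : a < u ⟨2*n-3, by omega⟩ := by
      have H := halt (2*n-3) (by omega)
      rw [if_neg (by omega)] at H
      have e : (⟨2*n-3+1, by omega⟩ : Fin (2*n)) = ⟨2*n-2, by omega⟩ := by
        apply Fin.ext; simp; omega
      rw [e] at H
      omega
    have hi1a : u i1 < a := by
      rcases Nat.lt_or_ge (u i1) a with h | h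
      · exact h
      · have e : u i1 = u ⟨2*n-2, by omega⟩ := by omega
        have e2 : i1 = ⟨2*n-2, by omega⟩ := hu.1 e
        have := congrArg Fin.val e2
        simp at this
        omega
    have hne3 : (i2:ℕ) + 3 ≠ 2*n := by
      intro he
      have e : i2 = ⟨2*n-3, by omega⟩ := by apply Fin.ext; simp; omega
      rw [e] at hlt
      omega
    exact havoid ⟨i1, i2, ⟨2*n-3, by omega⟩, ⟨2*n-2, by omega⟩,
      h12, by rw [Fin.lt_def]; simp; omega, by rw [Fin.lt_def]; simp; omega,
      hlt, by omega, by omega⟩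
  have noBadLow : ∀ c, c ≤ a + 1 → ¬ Bad u c := by
    rintro c hc ⟨i1, i2, i3, h12, h23, p1, p2, p3⟩
    have h23' : (i2:ℕ) < (i3:ℕ) := h23
    have := key i1 i2 h12 (by have := i3.isLt; omega) p1
    omega
  have hAvoidV : ¬ Contains2143 (extendBy u x) := by
    rw [contains_extend_iff]
    rintro (h | h)
    · exact havoid h
    · exact noBadLow x hx2 h
  have hAltV : Alternating (extendBy u x) := by
    intro i h
    by_cases hi : i + 1 < 2*n
    · have H := halt i hi
      have r1 : extendBy u x ⟨i, by omega⟩ = bumpv x (u ⟨i, by omega⟩) :=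
        extendBy_mk' u x i (by omega) (by omega)
      have r2 : extendBy u x ⟨i+1, h⟩ = bumpv x (u ⟨i+1, hi⟩) :=
        extendBy_mk' u x (i+1) h hi
      by_cases hp : i % 2 = 0
      · rw [if_pos hp] at H ⊢
        rw [r1, r2]
        exact bumpv_lt_bumpv.mpr H
      · rw [if_neg hp] at H ⊢
        rw [r1, r2]
        exact bumpv_lt_bumpv.mpr H
    · have hp : ¬ i % 2 = 0 := by omega
      rw [if_neg hp]
      have r1 : extendBy u x ⟨i+1, h⟩ = x :=
        extendBy_apply_last u x ⟨i+1, h⟩ (by simp; omega)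
      have r2 : extendBy u x ⟨i, by omega⟩ = bumpv x (u ⟨i, by omega⟩) :=
        extendBy_mk' u x i (by omega) (by omega)
      rw [r1, r2, lt_bumpv_self]
      have e : (⟨i, by omega⟩ : Fin (2*n)) = ⟨2*n-1, by omega⟩ := by
        apply Fin.ext; simp; omega
      rw [e]
      omega
  have hAvU := isActive_iff havoid
  have hAvV := isActive_iff hAvoidV
  have sMem : ∀ i : Fin b, s i ∈ activeSet u := by
    intro i; rw [← hrange]; exact ⟨i, rfl⟩
  have sLB : ∀ k (hk : k < b), k + 1 ≤ s ⟨k, hk⟩ := by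
    intro k
    induction k with
    | zero => intro hk; exact (sMem ⟨0, hk⟩).1
    | succ k ih =>
      intro hk
      have hk' : k < b := by omega
      have h1 := ih hk'
      have h2 : s ⟨k, hk'⟩ < s ⟨k+1, hk⟩ := hs (by rw [Fin.lt_def]; simp)
      omega
  have sLB' : ∀ i : Fin b, (i:ℕ) + 1 ≤ s i := by
    intro i
    have := sLB i.1 i.isLt
    simpa using this
  have sSmall : ∀ k, k + 1 < x → ∃ hk : k < b, s ⟨k, hk⟩ = k + 1 := by
    intro k
    induction k using Nat.strong_induction_on with
    | _ k ih =>
      intro hkx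
      have hact : (k+1) ∈ activeSet u := by
        refine ⟨by omega, by omega, ?_⟩
        rw [hAvU]; exact noBadLow (k+1) (by omega)
      rw [← hrange] at hact
      obtain ⟨j, hj⟩ := hact
      have hjk : (j:ℕ) = k := by
        rcases lt_trichotomy ((j:ℕ)) k with h | h | h
        · obtain ⟨h', e⟩ := ih (j:ℕ) h (by omega)
          have e2 : s j = (j:ℕ) + 1 := by
            rw [← e]
          omega
        · exact h
        · have hkb : k < b := by have := j.isLt; omega
          have h2 : s ⟨k, hkb⟩ < s j := hs (by rw [Fin.lt_def]; simpa using h)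
          have h3 := sLB k hkb
          omega
      have hkb : k < b := by have := j.isLt; omega
      refine ⟨hkb, ?_⟩
      have e : (⟨k, hkb⟩ : Fin b) = j := by apply Fin.ext; simp; omega
      rw [e, hj]
  refine ⟨hAltV, hAvoidV, ?_⟩
  ext c
  simp only [Set.mem_union, Set.mem_Icc, Set.mem_setOf_eq, activeSet]
  constructor
  · rintro ⟨hc1, hc2, hact⟩
    by_cases hcx : c ≤ x
    · left; exact ⟨hc1, hcx⟩
    · right
      push_neg at hcx
      obtain ⟨c', rfl⟩ : ∃ c', c = c' + 1 := ⟨c - 1, by omega⟩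
      rw [hAvV, bad_extend_iff u (by omega : x ≤ c')] at hact
      have hc' : c' ∈ activeSet u := ⟨by omega, by omega, (hAvU c').mpr hact⟩
      rw [← hrange] at hc'
      obtain ⟨i, hi⟩ := hc'
      refine ⟨i, ?_, by omega⟩
      by_contra hix
      push_neg at hix
      obtain ⟨h', e⟩ := sSmall (i:ℕ) (by omega)
      have e2 : s i = (i:ℕ) + 1 := by
        rw [← e]
      omega
  · rintro (⟨hc1, hc2⟩ | ⟨i, hxi, rfl⟩)
    · refine ⟨hc1, by omega, ?_⟩
      rw [hAvV]
      rintro ⟨i1, i2, i3, h12, h23, p1, p2, p3⟩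
      have h12' : (i1:ℕ) < (i2:ℕ) := h12
      have h23' : (i2:ℕ) < (i3:ℕ) := h23
      have h2 : (i2:ℕ) < 2*n := by have := i3.isLt; omega
      have h1 : (i1:ℕ) < 2*n := by omega
      rw [extendBy_apply_lt u x i1 h1] at p1 p2
      rw [extendBy_apply_lt u x i2 h2] at p1
      have q1 : u ⟨(i2:ℕ), h2⟩ < u ⟨(i1:ℕ), h1⟩ := bumpv_lt_bumpv.mp p1
      have q2 : u ⟨(i1:ℕ), h1⟩ < c := by
        have := le_bumpv (c := x) (t := u ⟨(i1:ℕ), h1⟩)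
        omega
      rcases Nat.lt_or_ge (i2:ℕ) (2*n-1) with hcase | hcase
      · have := key ⟨(i1:ℕ), h1⟩ ⟨(i2:ℕ), h2⟩ h12' (show (i2:ℕ) + 2 ≤ 2*n by omega) q1
        omega
      · have e : (⟨(i2:ℕ), h2⟩ : Fin (2*n)) = ⟨2*n-1, by omega⟩ := by
          apply Fin.ext; simp; omega
        rw [e] at q1
        omega
    · have hsi := sMem i
      have hxsi : x ≤ s i := le_trans hxi (sLB' i)
      refine ⟨by omega, by have := hsi.2.1; omega, ?_⟩
      rw [hAvV, bad_extend_iff u hxsi]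
      exact (hAvU _).mp hsi.2.2
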